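/- arXiv:2406.15631 — 2 statements merged into one kernel-verified Lean document; each statement's English description precedes it below -/
import Mathlib

section
/- Let 𝔽 be a finite field with q elements and let m, d be natural numbers with m ≤ d. Let N be the number of m-dimensional 𝔽-subspaces of a d-dimensional 𝔽-vector space. Then q^{m(d−m)} ≤ N ≤ 8·q^{m(d−m)}. -/
noncomputable section

open Function

/-- A (two-sided) ideal of a non-unital non-associative algebra: a submodule closed under
left and right multiplication by arbitrary elements. -/
def IsAlgIdeal (𝔽 : Type*) [Semiring 𝔽] {A : Type*} [NonUnitalNonAssocSemiring A]
    [Module 𝔽 A] (I : Submodule 𝔽 A) : Prop :=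
  ∀ a b : A, b ∈ I → a * b ∈ I ∧ b * a ∈ I

/-- A derivation of a non-unital non-associative algebra. -/
def IsDerivation (𝔽 : Type*) [Semiring 𝔽] {A : Type*} [NonUnitalNonAssocSemiring A]
    [Module 𝔽 A] (d : A →ₗ[𝔽] A) : Prop :=
  ∀ a b : A, d (a * b) = d a * b + a * d b

/-- A subset is fully invariant if every algebra endomorphism maps it into itself. -/
def FullyInvariant (𝔽 : Type*) [Semiring 𝔽] {A : Type*} [NonUnitalNonAssocSemiring A]
    [Module 𝔽 A] (K : Submodule 𝔽 A) : Prop :=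
  ∀ φ : A →ₙₐ[𝔽] A, ∀ x ∈ K, φ x ∈ K

/-- The `n`-th power of a non-unital non-associative algebra: the span of all products
of `n` elements (with all possible bracketings), i.e. `A^n = Σ_{i+j=n} A^i·A^j`, `A^1 = A`. -/
def algPow (𝔽 : Type*) [Semiring 𝔽] (A : Type*) [NonUnitalNonAssocSemiring A] [Module 𝔽 A]
    (n : ℕ) : Submodule 𝔽 A :=
  Submodule.span 𝔽 {x | ∃ w : FreeMagma A, w.length = n ∧ FreeMagma.lift id w = x}

/-- The annihilator `I(A) = {x | xA = Ax = 0}` of a non-unital non-associative algebra. -/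
def annIdeal (𝔽 : Type*) [Semiring 𝔽] (A : Type*) [NonUnitalNonAssocSemiring A]
    [Module 𝔽 A] [SMulCommClass 𝔽 A A] [IsScalarTower 𝔽 A A] : Submodule 𝔽 A where
  carrier := {x | ∀ a : A, x * a = 0 ∧ a * x = 0}
  add_mem' := by
    intro x y hx hy a
    exact ⟨by rw [add_mul, (hx a).1, (hy a).1, add_zero],
           by rw [mul_add, (hx a).2, (hy a).2, add_zero]⟩
  zero_mem' := by intro a; simp
  smul_mem' := by
    intro c x hx a
    exact ⟨by rw [smul_mul_assoc, (hx a).1, smul_zero],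
           by rw [mul_smul_comm, (hx a).2, smul_zero]⟩

/-- The ascending annihilator series: `I₀ = 0`, and `I_{k+1}` is the preimage in `A` of the
annihilator of `A/I_k`. -/
def annSeries (𝔽 : Type*) [Semiring 𝔽] (A : Type*) [NonUnitalNonAssocSemiring A]
    [Module 𝔽 A] [SMulCommClass 𝔽 A A] [IsScalarTower 𝔽 A A] : ℕ → Submodule 𝔽 A
  | 0 => ⊥
  | (k+1) =>
    { carrier := {x | ∀ a : A, x * a ∈ annSeries 𝔽 A k ∧ a * x ∈ annSeries 𝔽 A k}
      add_mem' := by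
        intro x y hx hy a
        exact ⟨by rw [add_mul]; exact Submodule.add_mem _ (hx a).1 (hy a).1,
               by rw [mul_add]; exact Submodule.add_mem _ (hx a).2 (hy a).2⟩
      zero_mem' := by
        intro a
        simp only [zero_mul, mul_zero]
        exact ⟨Submodule.zero_mem _, Submodule.zero_mem _⟩
      smul_mem' := by
        intro c x hx a
        exact ⟨by rw [smul_mul_assoc]; exact Submodule.smul_mem _ _ (hx a).1,
               by rw [mul_smul_comm]; exact Submodule.smul_mem _ _ (hx a).2⟩ }

/-- The multidegree of a nonassociative monomial: the finitely supported function recording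
the number of occurrences of each generator. -/
def multideg {X : Type*} : FreeMagma X → (X →₀ ℕ)
  | FreeMagma.of x => Finsupp.single x 1
  | FreeMagma.mul a b => multideg a + multideg b

/-- The multihomogeneous component of multidegree `α` of an element of the free
nonassociative algebra. -/
def mhComponent {𝔽 : Type*} [Semiring 𝔽] {X : Type*}
    (f : FreeNonUnitalNonAssocAlgebra 𝔽 X) (α : X →₀ ℕ) :
    FreeNonUnitalNonAssocAlgebra 𝔽 X :=
  haveI : DecidablePred fun w : FreeMagma X => multideg w = α := fun _ => Classical.dec _
  MonoidAlgebra.ofCoeff (Finsupp.filter (fun w => multideg w = α) f.coeff)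

/-- A submodule of the free nonassociative algebra is multihomogeneous if it contains all
multihomogeneous components of each of its elements. -/
def Multihomogeneous (𝔽 : Type*) [Semiring 𝔽] {X : Type*}
    (K : Submodule 𝔽 (FreeNonUnitalNonAssocAlgebra 𝔽 X)) : Prop :=
  ∀ f ∈ K, ∀ α : X →₀ ℕ, mhComponent f α ∈ K

/-- `rank_B(V)`: the least cardinality of a subset of `V` generating `V` as a module over
`𝔽[t]`, where `t` acts as the linear operator `B`; equivalently, the least cardinality of a
set whose smallest `B`-invariant subspace is all of `V`. -/
def endRank (𝔽 : Type*) [Semiring 𝔽] {V : Type*} [AddCommMonoid V] [Module 𝔽 V]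
    (B : V →ₗ[𝔽] V) : ℕ :=
  sInf {k | ∃ s : Finset V, s.card = k ∧
    ∀ W : Submodule 𝔽 V, (↑s : Set V) ⊆ W → (∀ x ∈ W, B x ∈ W) → W = ⊤}

/-- For submodules `U, V` of a non-unital non-associative algebra, `mulSub 𝔽 U V` is the
`𝔽`-span of all products `u * v` with `u ∈ U`, `v ∈ V`. -/
def mulSub (𝔽 : Type*) [Semiring 𝔽] {A : Type*} [NonUnitalNonAssocSemiring A] [Module 𝔽 A]
    (U V : Submodule 𝔽 A) : Submodule 𝔽 A :=
  Submodule.span 𝔽 {x | ∃ u ∈ U, ∃ v ∈ V, x = u * v}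

section AuxForStatement17

open Finset Submodule



variable {𝔽 : Type*} [Field 𝔽] [Fintype 𝔽]

lemma aux_card_sigma {ι : Type*} [Fintype ι] (f : ι → Type*) [∀ i, Finite (f i)] :
    Nat.card (Σ i, f i) = ∑ i : ι, Nat.card (f i) := by
  classical
  haveI := fun i => Fintype.ofFinite (f i)
  simp [Nat.card_eq_fintype_card, Fintype.card_sigma]

lemma aux_card_li (V : Type*) [AddCommGroup V] [Module 𝔽 V] [FiniteDimensional 𝔽 V] (k : ℕ) :
    Nat.card {v : Fin k → V // LinearIndependent 𝔽 v} =
      ∏ i ∈ Finset.range k, (Fintype.card 𝔽 ^ Module.finrank 𝔽 V - Fintype.card 𝔽 ^ i) := by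
  classical
  haveI : Finite V := Module.finite_of_finite 𝔽
  haveI : Fintype V := Fintype.ofFinite V
  induction k with
  | zero =>
    have h : ∀ v : Fin 0 → V, LinearIndependent 𝔽 v := fun v => linearIndependent_empty_type
    rw [Nat.card_congr (Equiv.subtypeUnivEquiv h)]
    simp
  | succ k ih =>
    set f : {v : Fin (k+1) → V // LinearIndependent 𝔽 v} →
        {w : Fin k → V // LinearIndependent 𝔽 w} := fun v =>
      ⟨Fin.init v.1, (linearIndependent_fin_snoc.mp
        (by rw [Fin.snoc_init_self]; exact v.2)).1⟩ with hf
    rw [Nat.card_congr (Equiv.sigmaFiberEquiv f).symm, aux_card_sigma]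
    have hfib : ∀ w : {w : Fin k → V // LinearIndependent 𝔽 w},
        Nat.card {v // f v = w} =
          Fintype.card 𝔽 ^ Module.finrank 𝔽 V - Fintype.card 𝔽 ^ k := by
      intro w
      have e : {v // f v = w} ≃ {x : V // x ∉ span 𝔽 (Set.range w.1)} :=
        { toFun := fun v => ⟨v.1.1 (Fin.last k), by
            have h2 := (linearIndependent_fin_snoc.mp
              (by rw [Fin.snoc_init_self]; exact v.1.2 :
                LinearIndependent 𝔽 (Fin.snoc (Fin.init v.1.1) (v.1.1 (Fin.last k))))).2
            have hw : Fin.init v.1.1 = w.1 := congrArg Subtype.val v.2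
            rwa [hw] at h2⟩
          invFun := fun x => ⟨⟨Fin.snoc w.1 x.1,
              linearIndependent_fin_snoc.mpr ⟨w.2, x.2⟩⟩,
            Subtype.ext (by simp [hf])⟩
          left_inv := fun v => by
            apply Subtype.ext; apply Subtype.ext
            have hw : Fin.init v.1.1 = w.1 := congrArg Subtype.val v.2
            have h3 := Fin.snoc_init_self v.1.1
            rw [hw] at h3
            exact h3
          right_inv := fun x => by
            apply Subtype.ext
            simp }
      rw [Nat.card_congr e, Nat.card_eq_fintype_card,
        Fintype.card_subtype_compl (fun x => x ∈ span 𝔽 (Set.range w.1))]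
      have h1 : Fintype.card V = Fintype.card 𝔽 ^ Module.finrank 𝔽 V :=
        Module.card_eq_pow_finrank
      have h2 : Fintype.card {x : V // x ∈ span 𝔽 (Set.range w.1)} =
          Fintype.card 𝔽 ^ k := by
        have : Fintype.card (span 𝔽 (Set.range w.1)) =
            Fintype.card 𝔽 ^ Module.finrank 𝔽 (span 𝔽 (Set.range w.1)) :=
          Module.card_eq_pow_finrank
        rw [show Module.finrank 𝔽 (span 𝔽 (Set.range w.1)) = k from
          (finrank_span_eq_card w.2).trans (Fintype.card_fin k)] at this
        convert this using 2
      rw [h1, h2]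
    rw [Finset.sum_congr rfl (fun w _ => hfib w), Finset.sum_const, Finset.card_univ,
      ← Nat.card_eq_fintype_card, ih, Finset.prod_range_succ, smul_eq_mul]

lemma aux_card_grass (V : Type*) [AddCommGroup V] [Module 𝔽 V] [FiniteDimensional 𝔽 V]
    (m : ℕ) :
    Nat.card {v : Fin m → V // LinearIndependent 𝔽 v} =
      Nat.card {W : Submodule 𝔽 V // Module.finrank 𝔽 W = m} *
        ∏ i ∈ Finset.range m, (Fintype.card 𝔽 ^ m - Fintype.card 𝔽 ^ i) := by
  classical
  haveI : Finite V := Module.finite_of_finite 𝔽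
  haveI : Fintype V := Fintype.ofFinite V
  set f : {v : Fin m → V // LinearIndependent 𝔽 v} →
      {W : Submodule 𝔽 V // Module.finrank 𝔽 W = m} := fun v =>
    ⟨span 𝔽 (Set.range v.1), (finrank_span_eq_card v.2).trans (Fintype.card_fin m)⟩ with hf
  rw [Nat.card_congr (Equiv.sigmaFiberEquiv f).symm, aux_card_sigma]
  have hfib : ∀ W : {W : Submodule 𝔽 V // Module.finrank 𝔽 W = m},
      Nat.card {v // f v = W} =
        ∏ i ∈ Finset.range m, (Fintype.card 𝔽 ^ m - Fintype.card 𝔽 ^ i) := by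
    intro W
    have e : {v // f v = W} ≃ {u : Fin m → W.1 // LinearIndependent 𝔽 u} :=
      { toFun := fun v =>
          ⟨fun i => ⟨v.1.1 i, by
            have hs : span 𝔽 (Set.range v.1.1) = W.1 := congrArg Subtype.val v.2
            exact hs ▸ subset_span (Set.mem_range_self i)⟩, by
            apply LinearIndependent.of_comp (W.1).subtype
            exact v.1.2⟩
        invFun := fun u =>
          ⟨⟨(W.1).subtype ∘ u.1, u.2.map' (W.1).subtype (ker_subtype W.1)⟩, by
            apply Subtype.ext
            show span 𝔽 (Set.range ((W.1).subtype ∘ u.1)) = W.1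
            rw [Set.range_comp, ← Submodule.map_span,
              u.2.span_eq_top_of_card_eq_finrank' ((Fintype.card_fin m).trans W.2.symm),
              Submodule.map_top, range_subtype]⟩
        left_inv := fun v => by apply Subtype.ext; apply Subtype.ext; rfl
        right_inv := fun u => by
          apply Subtype.ext; funext i; apply Subtype.ext; rfl }
    rw [Nat.card_congr e, aux_card_li, W.2]
  rw [Finset.sum_congr rfl (fun W _ => hfib W), Finset.sum_const, Finset.card_univ,
    ← Nat.card_eq_fintype_card, smul_eq_mul]





lemma aux_q_prod (q : ℕ) (hq : 2 ≤ q) (m : ℕ) :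
    (1:ℚ)/4 + ((q:ℚ)⁻¹)^(m+1)/2 ≤ ∏ i ∈ Finset.range (m+1), (1 - ((q:ℚ)⁻¹)^(i+1)) := by
  have hq0 : (0:ℚ) < q := by positivity
  have hr0 : (0:ℚ) < (q:ℚ)⁻¹ := by positivity
  have hr : ((q:ℚ))⁻¹ ≤ 1/2 := by
    rw [inv_le_comm₀ hq0 (by norm_num)]
    · norm_num; exact_mod_cast hq
  induction m with
  | zero =>
    rw [show (0:ℕ)+1 = 1 from rfl, Finset.prod_range_one]
    nlinarith
  | succ m ih =>
    rw [Finset.prod_range_succ]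
    have ht0 : (0:ℚ) < ((q:ℚ)⁻¹)^(m+1) := by positivity
    have hle : ∀ k : ℕ, ((q:ℚ)⁻¹)^(k+1) ≤ 1/2 := by
      intro k
      calc ((q:ℚ)⁻¹)^(k+1) ≤ ((q:ℚ)⁻¹)^1 :=
            pow_le_pow_of_le_one (le_of_lt hr0) (by linarith) (Nat.le_add_left 1 k)
        _ = ((q:ℚ))⁻¹ := pow_one _
        _ ≤ 1/2 := hr
    have ht : ((q:ℚ)⁻¹)^(m+1) ≤ 1/2 := hle m
    have hf0 : (0:ℚ) ≤ 1 - ((q:ℚ)⁻¹)^(m+1+1) := by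
      have := hle (m+1)
      linarith
    have h1 : (1/4 + ((q:ℚ)⁻¹)^(m+1)/2) * (1 - ((q:ℚ)⁻¹)^(m+1+1)) ≤
        (∏ i ∈ Finset.range (m+1), (1 - ((q:ℚ)⁻¹)^(i+1))) * (1 - ((q:ℚ)⁻¹)^(m+1+1)) :=
      mul_le_mul_of_nonneg_right ih hf0
    refine le_trans ?_ h1
    have hpow : ((q:ℚ)⁻¹)^(m+1+1) = ((q:ℚ)⁻¹)^(m+1) * (q:ℚ)⁻¹ := by ring
    rw [hpow]
    set t := ((q:ℚ)⁻¹)^(m+1)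
    set r := ((q:ℚ))⁻¹
    nlinarith [mul_pos ht0 hr0]

lemma aux_nat_prod (q : ℕ) (hq : 2 ≤ q) (m : ℕ) :
    q ^ (m * m) ≤ 8 * ∏ i ∈ Finset.range m, (q ^ m - q ^ i) := by
  have hq0 : (0:ℚ) < q := by positivity
  have key : ((q:ℚ)) ^ (m*m) ≤ 4 * ∏ i ∈ Finset.range m, ((q:ℚ) ^ m - (q:ℚ) ^ i) := by
    have hfac : ∀ i ∈ Finset.range m, ((q:ℚ) ^ m - (q:ℚ) ^ i) =
        (q:ℚ)^m * (1 - ((q:ℚ)⁻¹)^(m - i)) := by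
      intro i hi
      rw [Finset.mem_range] at hi
      have h2 : ((q:ℚ))^(m-i) ≠ 0 := by positivity
      have h3 : (q:ℚ)^m * (((q:ℚ))^(m-i))⁻¹ = (q:ℚ)^i := by
        rw [mul_inv_eq_iff_eq_mul₀ h2, ← pow_add]
        congr 1
        omega
      rw [mul_sub, mul_one, inv_pow, h3]
    rw [Finset.prod_congr rfl hfac, Finset.prod_mul_distrib, Finset.prod_const,
      Finset.card_range, ← pow_mul]
    have hrefl : ∏ i ∈ Finset.range m, (1 - ((q:ℚ)⁻¹)^(m - i)) =
        ∏ j ∈ Finset.range m, (1 - ((q:ℚ)⁻¹)^(j + 1)) := by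
      rw [← Finset.prod_range_reflect]
      apply Finset.prod_congr rfl
      intro j hj
      rw [Finset.mem_range] at hj
      congr 2
      omega
    rw [hrefl]
    rcases Nat.eq_zero_or_pos m with hm | hm
    · subst hm; simp
    · obtain ⟨m', rfl⟩ : ∃ m', m = m' + 1 := ⟨m - 1, by omega⟩
      have := aux_q_prod q hq m'
      have ht0 : (0:ℚ) < ((q:ℚ)⁻¹)^(m'+1) := by positivity
      have hpm : (0:ℚ) < (q:ℚ) ^ (m' + 1) ^ 2 := by positivity
      calc ((q:ℚ))^((m'+1)*(m'+1)) = (q:ℚ)^((m'+1)*(m'+1)) * 1 := by ring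
        _ ≤ 4 * ((q:ℚ)^((m'+1)*(m'+1)) *
              ∏ j ∈ Finset.range (m'+1), (1 - ((q:ℚ)⁻¹)^(j + 1))) := by
            have h4 : (1:ℚ)/4 ≤ ∏ j ∈ Finset.range (m'+1), (1 - ((q:ℚ)⁻¹)^(j + 1)) := by
              linarith
            nlinarith [pow_pos hq0 ((m'+1)*(m'+1))]
  calc q ^ (m*m) ≤ 4 * ∏ i ∈ Finset.range m, (q ^ m - q ^ i) := by
        have hcast : ((∏ i ∈ Finset.range m, (q ^ m - q ^ i) : ℕ) : ℚ) =
            ∏ i ∈ Finset.range m, ((q:ℚ) ^ m - (q:ℚ) ^ i) := by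
          rw [Nat.cast_prod]
          apply Finset.prod_congr rfl
          intro i hi
          rw [Finset.mem_range] at hi
          rw [Nat.cast_sub (Nat.pow_le_pow_right (by omega) (by omega))]
          push_cast; ring
        have : ((q:ℚ)) ^ (m*m) ≤ ((4 * ∏ i ∈ Finset.range m, (q ^ m - q ^ i) : ℕ) : ℚ) := by
          push_cast [hcast]
          exact key
        exact_mod_cast this
    _ ≤ 8 * ∏ i ∈ Finset.range m, (q ^ m - q ^ i) := by
        apply Nat.mul_le_mul_right; omega

end AuxForStatement17

/-- Over a finite field with `q` elements, the number `N` of `m`-dimensional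
subspaces of a `d`-dimensional vector space (`m ≤ d`) satisfies
`q^{m(d−m)} ≤ N ≤ 8·q^{m(d−m)}`. -/
theorem statement17 (𝔽 : Type*) [Field 𝔽] [Fintype 𝔽] (q : ℕ) (hq : Fintype.card 𝔽 = q)
    (V : Type*) [AddCommGroup V] [Module 𝔽 V] [FiniteDimensional 𝔽 V]
    (m d : ℕ) (hd : Module.finrank 𝔽 V = d) (hmd : m ≤ d)
    (N : ℕ) (hN : N = Nat.card {W : Submodule 𝔽 V // Module.finrank 𝔽 W = m}) :
    q ^ (m * (d - m)) ≤ N ∧ N ≤ 8 * q ^ (m * (d - m)) := by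
  have hq2 : 2 ≤ q := hq ▸ Fintype.one_lt_card
  set P := ∏ i ∈ Finset.range m, (q ^ m - q ^ i) with hP
  set Q := ∏ i ∈ Finset.range m, (q ^ d - q ^ i) with hQ
  have key : Q = N * P := by
    have k1 := aux_card_li (𝔽 := 𝔽) V m
    have k2 := aux_card_grass (𝔽 := 𝔽) V m
    rw [hq, hd] at k1
    rw [hq] at k2
    rw [hQ, hP, hN, ← k1, k2]
  have hPpos : 0 < P := by
    rw [hP]
    apply Finset.prod_pos
    intro i hi
    rw [Finset.mem_range] at hi
    have := Nat.pow_lt_pow_right hq2 hi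
    omega
  constructor
  · have hle : q ^ (m * (d - m)) * P ≤ Q := by
      have e1 : ∏ i ∈ Finset.range m, (q ^ (d - m) * (q ^ m - q ^ i)) =
          q ^ (m * (d - m)) * P := by
        rw [Finset.prod_mul_distrib, Finset.prod_const, Finset.card_range, ← pow_mul,
          Nat.mul_comm (d - m) m, hP]
      rw [hQ, ← e1]
      apply Finset.prod_le_prod'
      intro i hi
      rw [Finset.mem_range] at hi
      calc q ^ (d - m) * (q ^ m - q ^ i)
          = q ^ d - q ^ (d - m + i) := by
            rw [Nat.mul_sub, ← pow_add, ← pow_add, Nat.sub_add_cancel hmd]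
        _ ≤ q ^ d - q ^ i := by
            apply Nat.sub_le_sub_left
            exact Nat.pow_le_pow_right (by omega) (by omega)
    rw [key] at hle
    exact Nat.le_of_mul_le_mul_right hle hPpos
  · have hQle : Q ≤ q ^ (m * d) := by
      calc Q ≤ ∏ i ∈ Finset.range m, q ^ d := by
            apply Finset.prod_le_prod'
            intro i _
            exact Nat.sub_le _ _
        _ = q ^ (m * d) := by rw [Finset.prod_const, Finset.card_range, ← pow_mul, Nat.mul_comm]
    have hsplit : q ^ (m * d) = q ^ (m * (d - m)) * q ^ (m * m) := by
      rw [← pow_add, ← Nat.mul_add, Nat.sub_add_cancel hmd]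
    have h8 : q ^ (m * m) ≤ 8 * P := aux_nat_prod q hq2 m
    have : N * P ≤ (8 * q ^ (m * (d - m))) * P := by
      calc N * P = Q := key.symm
        _ ≤ q ^ (m * (d - m)) * q ^ (m * m) := by rw [← hsplit]; exact hQle
        _ ≤ q ^ (m * (d - m)) * (8 * P) := Nat.mul_le_mul_left _ h8
        _ = (8 * q ^ (m * (d - m))) * P := by ring
    exact Nat.le_of_mul_le_mul_right this hPpos
end
end

section
/- Let 𝔽 be a finite field with q elements, X a set, and K a fully invariant ideal of the free nonassociative algebra 𝓕(X) over 𝔽. For f ∈ 𝓕(X) and a residue class k̄ ∈ ℤ/(q−1)ℤ, let f_{k̄} denote the sum of those monomial terms of f whose total degree is congruent to k modulo q − 1 (so f = Σ_{k̄} f_{k̄}). Then for every f ∈ K and every k̄ ∈ ℤ/(q−1)ℤ, the quasihomogeneous component f_{k̄} belongs to K. -/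
noncomputable section

open Function

/-- The quasihomogeneous component of `f` in degree `k̄ ∈ ℤ/(q−1)ℤ`: the sum of the monomial
terms of `f` whose total degree is congruent to `k` modulo `q − 1`. -/
noncomputable def quasiComponent (𝔽 : Type*) [Semiring 𝔽] {X : Type*} (q : ℕ)
    (f : FreeNonUnitalNonAssocAlgebra 𝔽 X) (kbar : ZMod (q - 1)) :
    FreeNonUnitalNonAssocAlgebra 𝔽 X :=
  haveI : DecidablePred fun w : FreeMagma X => ((w.length : ZMod (q - 1)) = kbar) :=
    fun _ => Classical.dec _
  MonoidAlgebra.ofCoeff (Finsupp.filter (fun w : FreeMagma X => ((w.length : ZMod (q - 1)) = kbar)) f.coeff)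

/-- The endomorphism of the free algebra scaling each generator by `c`. -/
noncomputable def scaleHom {𝔽 : Type*} [Field 𝔽] {X : Type*} (c : 𝔽) :
    FreeNonUnitalNonAssocAlgebra 𝔽 X →ₙₐ[𝔽] FreeNonUnitalNonAssocAlgebra 𝔽 X :=
  FreeNonUnitalNonAssocAlgebra.lift 𝔽 (fun x => c • FreeNonUnitalNonAssocAlgebra.of 𝔽 x)

lemma scaleHom_single {𝔽 : Type*} [Field 𝔽] {X : Type*} (c : 𝔽) (w : FreeMagma X) (r : 𝔽) :
    scaleHom c (MonoidAlgebra.single w r) = c ^ w.length • MonoidAlgebra.single w r := by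
  have key : ∀ w : FreeMagma X,
      scaleHom c (MonoidAlgebra.single w (1 : 𝔽)) = c ^ w.length • MonoidAlgebra.single w 1 := by
    intro w
    induction w with
    | ih1 x =>
      have h1 : (MonoidAlgebra.single (FreeMagma.of x) (1 : 𝔽) :
          FreeNonUnitalNonAssocAlgebra 𝔽 X) = FreeNonUnitalNonAssocAlgebra.of 𝔽 x := rfl
      rw [h1, scaleHom, FreeNonUnitalNonAssocAlgebra.lift_of_apply]
      simp [h1]
    | ih2 a b ha hb =>
      have h1 : (MonoidAlgebra.single (a * b) (1 : 𝔽) :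
          FreeNonUnitalNonAssocAlgebra 𝔽 X)
          = MonoidAlgebra.single a 1 * MonoidAlgebra.single b 1 := by
        rw [MonoidAlgebra.single_mul_single, one_mul]
      rw [h1, map_mul, ha, hb, smul_mul_assoc, mul_smul_comm, smul_smul, ← pow_add, ← h1]
      simp
  have h2 : (MonoidAlgebra.single w r : FreeNonUnitalNonAssocAlgebra 𝔽 X)
      = r • MonoidAlgebra.single w 1 := by
    rw [MonoidAlgebra.smul_single', mul_one]
  rw [h2, map_smul, key, smul_comm]

lemma scaleHom_single' {𝔽 : Type*} [Field 𝔽] {X : Type*} (c : 𝔽) (w : FreeMagma X) (r : 𝔽) :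
    scaleHom c (MonoidAlgebra.single w r : FreeNonUnitalNonAssocAlgebra 𝔽 X)
      = c ^ w.length • MonoidAlgebra.single w r :=
  scaleHom_single c w r

open scoped Classical in
lemma units_geom_sum {𝔽 : Type*} [Field 𝔽] [Fintype 𝔽] (u : 𝔽ˣ) :
    ∑ j ∈ Finset.range (Fintype.card 𝔽 - 1), ((u : 𝔽)) ^ j
      = if u = 1 then ((Fintype.card 𝔽 - 1 : ℕ) : 𝔽) else 0 := by
  by_cases h : u = 1
  · simp [h]
  · rw [if_neg h]
    have hu : (u : 𝔽) ≠ 1 := fun hc => h (Units.ext hc)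
    have h1 : u ^ (Fintype.card 𝔽 - 1) = 1 := by
      rw [← Fintype.card_units]; exact pow_card_eq_one
    have h2 : (u : 𝔽) ^ (Fintype.card 𝔽 - 1) = 1 := by
      rw [← Units.val_pow_eq_pow_val, h1, Units.val_one]
    rw [geom_sum_eq hu, h2, sub_self, zero_div]

/-- Over a finite field with `q` elements, every fully invariant ideal `K` of
the free nonassociative algebra contains all quasihomogeneous components (total degree taken
modulo `q − 1`) of each of its elements. -/
theorem statement18 (𝔽 : Type*) [Field 𝔽] [Fintype 𝔽] (q : ℕ) (hq : Fintype.card 𝔽 = q)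
    (X : Type*) (K : Submodule 𝔽 (FreeNonUnitalNonAssocAlgebra 𝔽 X))
    (hideal : IsAlgIdeal 𝔽 K) (hfi : FullyInvariant 𝔽 K) :
    ∀ f ∈ K, ∀ kbar : ZMod (q - 1), quasiComponent 𝔽 q f kbar ∈ K := by
  classical
  intro f hf kbar
  have hq2 : 2 ≤ q := by rw [← hq]; exact Fintype.one_lt_card
  have hcast0 : ((q : ℕ) : 𝔽) = 0 := by rw [← hq]; exact FiniteField.cast_card_eq_zero 𝔽
  have hm1 : ((q - 1 : ℕ) : 𝔽) = -1 := by
    rw [Nat.cast_sub (by omega : 1 ≤ q), hcast0, Nat.cast_one, zero_sub]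
  obtain ⟨g, hg⟩ := IsCyclic.exists_generator (α := 𝔽ˣ)
  have horder : orderOf g = q - 1 := by
    rw [orderOf_eq_card_of_forall_mem_zpowers hg, Nat.card_eq_fintype_card,
      Fintype.card_units, hq]
  haveI : NeZero (q - 1) := ⟨by omega⟩
  have hqc : ∀ f : FreeNonUnitalNonAssocAlgebra 𝔽 X, quasiComponent 𝔽 q f kbar
      = MonoidAlgebra.ofCoeff (Finsupp.filter (fun w : FreeMagma X => ((w.length : ZMod (q - 1)) = kbar)) f.coeff) := by
    intro f
    simp only [quasiComponent]
    congr!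
  -- the key identity
  have main : ∀ f : FreeNonUnitalNonAssocAlgebra 𝔽 X,
      quasiComponent 𝔽 q f kbar = (-1 : 𝔽) • ∑ j ∈ Finset.range (q - 1),
        ((g⁻¹ ^ (j * kbar.val) : 𝔽ˣ) : 𝔽) • scaleHom ((g ^ j : 𝔽ˣ) : 𝔽) f := by
    intro f
    induction f using MonoidAlgebra.induction_linear with
    | zero => rw [hqc, MonoidAlgebra.coeff_zero, Finsupp.filter_zero]; simp
    | add f₁ f₂ h₁ h₂ =>
      rw [hqc] at h₁ h₂ ⊢
      rw [MonoidAlgebra.coeff_add, Finsupp.filter_add, MonoidAlgebra.ofCoeff_add, h₁, h₂, ← smul_add, ← Finset.sum_add_distrib]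
      congr 1
      refine Finset.sum_congr rfl fun j _ => ?_
      rw [map_add, smul_add]
    | single w r =>
      set L := w.length with hL
      set u : 𝔽ˣ := g ^ ((L : ℤ) - (kbar.val : ℤ)) with hu
      have hcoef : ∀ j : ℕ,
          ((g⁻¹ ^ (j * kbar.val) : 𝔽ˣ) : 𝔽) * ((g ^ j : 𝔽ˣ) : 𝔽) ^ L = ((u : 𝔽)) ^ j := by
        intro j
        have hunit : (g⁻¹ ^ (j * kbar.val)) * (g ^ j) ^ L = u ^ j := by
          rw [inv_pow, ← pow_mul, hu]
          rw [← zpow_natCast g (j * kbar.val), ← zpow_natCast g (j * L), ← zpow_neg,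
            ← zpow_add, ← zpow_natCast (g ^ ((L : ℤ) - (kbar.val : ℤ))) j, ← zpow_mul]
          congr 1
          push_cast
          ring
        calc ((g⁻¹ ^ (j * kbar.val) : 𝔽ˣ) : 𝔽) * ((g ^ j : 𝔽ˣ) : 𝔽) ^ L
            = (((g⁻¹ ^ (j * kbar.val)) * (g ^ j) ^ L : 𝔽ˣ) : 𝔽) := by
              push_cast; ring
          _ = ((u ^ j : 𝔽ˣ) : 𝔽) := by rw [hunit]
          _ = ((u : 𝔽)) ^ j := by push_cast; ring
      have hRHS : (∑ j ∈ Finset.range (q - 1),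
          ((g⁻¹ ^ (j * kbar.val) : 𝔽ˣ) : 𝔽) •
            scaleHom ((g ^ j : 𝔽ˣ) : 𝔽) (MonoidAlgebra.single w r : FreeNonUnitalNonAssocAlgebra 𝔽 X))
          = (∑ j ∈ Finset.range (q - 1), ((u : 𝔽)) ^ j) • MonoidAlgebra.single w r := by
        rw [Finset.sum_smul]
        refine Finset.sum_congr rfl fun j _ => ?_
        rw [scaleHom_single', smul_smul, hcoef]
      have hcond : u = 1 ↔ ((L : ZMod (q - 1)) = kbar) := by
        rw [hu, zpow_eq_one_iff_modEq, horder, Int.ModEq]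
        rw [Int.zero_emod, ← Int.dvd_iff_emod_eq_zero, ← ZMod.intCast_zmod_eq_zero_iff_dvd]
        push_cast
        rw [ZMod.natCast_val, ZMod.cast_id, sub_eq_zero]
      have hgeom : ∑ j ∈ Finset.range (q - 1), ((u : 𝔽)) ^ j
          = if (L : ZMod (q - 1)) = kbar then (-1 : 𝔽) else 0 := by
        have h3 := units_geom_sum u
        rw [hq] at h3
        rw [h3, hm1]
        by_cases h : u = 1
        · rw [if_pos h, if_pos (hcond.mp h)]
        · rw [if_neg h, if_neg (fun hc => h (hcond.mpr hc))]
      rw [hqc, hRHS, hgeom, MonoidAlgebra.coeff_single]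
      by_cases h : (L : ZMod (q - 1)) = kbar
      · rw [Finsupp.filter_single_of_pos (fun w : FreeMagma X => ((w.length : ZMod (q - 1)) = kbar)) h, if_pos h, smul_smul]
        change MonoidAlgebra.single w r = _
        norm_num
      · rw [Finsupp.filter_single_of_neg (fun w : FreeMagma X => ((w.length : ZMod (q - 1)) = kbar)) h, if_neg h, zero_smul, smul_zero, MonoidAlgebra.ofCoeff_zero]
  rw [main f]
  refine K.smul_mem _ (Submodule.sum_mem K fun j _ => ?_)
  exact K.smul_mem _ (hfi _ f hf)
end
end
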